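/- arXiv:1905.03857 — 3 statements merged into one kernel-verified Lean document; each statement's English description precedes it below -/
import Mathlib

section
/- Let K ≥ 2 be a natural number and let g, ρ : Fin K → ℕ be two monotone nondecreasing (sorted) vectors of natural numbers. If g is strictly smaller than ρ in the lexicographic order on Fin K → ℕ, then ξ(g) > ξ(ρ), i.e., ∑_{k} K^{−g(k)} > ∑_{k} K^{−ρ(k)} as real numbers. -/
/-!
Let `i` be the first index where `g` and `ρ` differ, so `g i < ρ i`, and put `x = 1/K`.
The two sums agree below `i`. From `i` on, monotonicity of `ρ` bounds each of the `K - i`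
terms `x ^ ρ k` by `x ^ (g i + 1)`, so their sum is at most `(K - i) x ^ (g i + 1) ≤ x ^ (g i)`,
which is the single term of `ξ(g)` at `i`. The inequality is strict: either `i > 0`, or `i = 0`
and the terms of `ξ(g)` after `i` (there is one since `K ≥ 2`) contribute something positive.
-/

open Finset

noncomputable def xi (K : ℕ) (v : Fin K → ℕ) : ℝ :=
  ∑ k : Fin K, ((K : ℝ))⁻¹ ^ v k

theorem sum_sub_sum_eq_sum_Ici {α M : Type*} [Fintype α] [LinearOrder α]
    [LocallyFiniteOrderTop α] [AddCommGroup M] (f h : α → M) (i : α)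
    (heq : ∀ j < i, f j = h j) :
    ∑ k, f k - ∑ k, h k = ∑ k ∈ Ici i, (f k - h k) := by
  rw [← sum_sub_distrib]
  refine (sum_subset (subset_univ _) fun k _ hk => ?_).symm
  rw [heq k (by simpa using hk), sub_self]

theorem sum_pow_le_card_mul_pow {ι : Type*} {s : Finset ι} {x : ℝ} (hx₀ : 0 ≤ x) (hx₁ : x ≤ 1)
    {v : ι → ℕ} {m : ℕ} (hv : ∀ k ∈ s, m ≤ v k) :
    ∑ k ∈ s, x ^ v k ≤ #s * x ^ m := by
  rw [← nsmul_eq_mul]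
  exact sum_le_card_nsmul _ _ _ fun k hk => pow_le_pow_of_le_one hx₀ hx₁ (hv k hk)

theorem card_Ici_mul_inv_pow_succ_lt_sum_Ici {K : ℕ} (hK : 2 ≤ K) (g : Fin K → ℕ) (i : Fin K) :
    #(Ici i) * ((K : ℝ)⁻¹) ^ (g i + 1) < ∑ k ∈ Ici i, ((K : ℝ)⁻¹) ^ g k := by
  set x : ℝ := (K : ℝ)⁻¹
  have hx : 0 < x := by positivity
  have hhead : x ^ g i = K * x ^ (g i + 1) := by
    rw [pow_succ, ← mul_assoc, mul_comm, ← mul_assoc, inv_mul_cancel₀ (by positivity), one_mul]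
  have htail : 0 ≤ ∑ k ∈ Ioi i, x ^ g k := sum_nonneg fun k _ => (pow_pos hx _).le
  rw [← Ioi_insert, sum_insert notMem_Ioi_self, hhead, Ioi_insert, Fin.card_Ici]
  rcases Nat.eq_zero_or_pos (i : ℕ) with hi | hi
  · have hpos : 0 < ∑ k ∈ Ioi i, x ^ g k :=
      sum_pos (fun k _ => pow_pos hx _) ⟨⟨1, hK⟩, mem_Ioi.2 (Fin.lt_def.2 (by simp [hi]))⟩
    simp only [hi, Nat.sub_zero]
    linarith
  · have hcard : ((K - i : ℕ) : ℝ) < K := by exact_mod_cast Nat.sub_lt (by omega) hi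
    nlinarith [pow_pos hx (g i + 1)]

theorem stmt_1_general (K : ℕ) (hK : 2 ≤ K) (g ρ : Fin K → ℕ)
    (hρ : Monotone ρ)
    (hlt : toLex g < toLex ρ) :
    xi K g > xi K ρ := by
  obtain ⟨i, hagree, hi⟩ := hlt
  simp only [Pi.toLex_apply] at hagree hi
  have hx₀ : (0 : ℝ) ≤ (K : ℝ)⁻¹ := by positivity
  have hx₁ : (K : ℝ)⁻¹ ≤ 1 := inv_le_one_of_one_le₀ (by exact_mod_cast (by omega : 1 ≤ K))
  have hρ_tail : ∑ k ∈ Ici i, ((K : ℝ)⁻¹) ^ ρ k ≤ #(Ici i) * ((K : ℝ)⁻¹) ^ (g i + 1) :=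
    sum_pow_le_card_mul_pow hx₀ hx₁ fun k hk => hi.trans_le (hρ (mem_Ici.1 hk))
  have hg_tail := card_Ici_mul_inv_pow_succ_lt_sum_Ici hK g i
  rw [gt_iff_lt, ← sub_pos, xi, xi, sum_sub_sum_eq_sum_Ici (fun k => ((K : ℝ)⁻¹) ^ g k) _ i
    fun j hj => by rw [hagree j hj], sum_sub_distrib, sub_pos]
  linarith

/-- Strict-inequality direction of Lemma 2: on sorted vectors, `ξ` strictly
reverses the lexicographic order. -/
theorem stmt_1 (K : ℕ) (hK : 2 ≤ K) (g ρ : Fin K → ℕ)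
    (hg : Monotone g) (hρ : Monotone ρ)
    (hlt : toLex g < toLex ρ) :
    xi K g > xi K ρ :=
  stmt_1_general K hK g ρ hρ hlt
end

section
/- Let K ≥ 2 be a natural number and let g, ρ : Fin K → ℕ be monotone nondecreasing (sorted) vectors. Then g ≤ ρ in the lexicographic order on Fin K → ℕ if and only if ξ(g) ≥ ξ(ρ), i.e., ∑_{k} K^{−g(k)} ≥ ∑_{k} K^{−ρ(k)}. -/
/-!
Write `x = 1/K`. If `g <ₗₑₓ ρ` and they first differ at `i`, the terms before `i` agree, and every
later term of `ρ` is at most `x ^ (g i + 1)` because `ρ` is sorted. The at most `K` of them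
therefore sum to at most `K x · x ^ (g i) = x ^ (g i)`, a lower bound for the tail of `g`; the
inequality is strict unless that tail is the single term `i`, where `x ^ (ρ i) < x ^ (g i)`
directly. So `ξ` is strictly antitone on sorted vectors, and hence reverses the (linear)
lexicographic order on them.
-/

open Finset

theorem Finset.sum_pow_lt_sum_pow_of_lt {ι : Type*} [DecidableEq ι] {s : Finset ι} {x : ℝ}
    (hx₀ : 0 < x) (hx₁ : x < 1) (hcard : #s * x ≤ 1) {a b : ι → ℕ} {i : ι} (hi : i ∈ s)
    (hab : ∀ k ∈ s, a i < b k) : ∑ k ∈ s, x ^ b k < ∑ k ∈ s, x ^ a k := by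
  rcases s.eq_singleton_or_nontrivial hi with rfl | hs
  · simpa using pow_lt_pow_right_of_lt_one₀ hx₀ hx₁ (hab i (mem_singleton_self i))
  obtain ⟨j, hj, hji⟩ := hs.exists_ne i
  calc ∑ k ∈ s, x ^ b k
      ≤ #s • x ^ (a i + 1) :=
        sum_le_card_nsmul _ _ _ fun k hk ↦ pow_le_pow_of_le_one hx₀.le hx₁.le (hab k hk)
    _ = (#s * x) * x ^ a i := by rw [nsmul_eq_mul, pow_succ]; ring
    _ ≤ x ^ a i := mul_le_of_le_one_left (by positivity) hcard
    _ < x ^ a i + ∑ k ∈ s.erase i, x ^ a k :=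
        lt_add_of_pos_right _ <| sum_pos (fun _ _ ↦ by positivity) ⟨j, mem_erase.2 ⟨hji, hj⟩⟩
    _ = ∑ k ∈ s, x ^ a k := add_sum_erase s (x ^ a ·) hi

theorem xi_eq_sum_Iio_add_sum_Ici (K : ℕ) (v : Fin K → ℕ) (i : Fin K) :
    xi K v = ∑ k ∈ Iio i, (K : ℝ)⁻¹ ^ v k + ∑ k ∈ Ici i, (K : ℝ)⁻¹ ^ v k := by
  rw [xi, ← sum_filter_add_sum_filter_not univ (· < i), filter_gt_eq_Iio]
  simp only [not_lt, filter_le_eq_Ici]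

theorem xi_lt_xi_of_toLex_lt {K : ℕ} (hK : 1 < K) {g ρ : Fin K → ℕ} (hρ : Monotone ρ)
    (h : toLex g < toLex ρ) : xi K ρ < xi K g := by
  obtain ⟨i, heq, hi⟩ := h
  have hcard : #(Ici i) * (K : ℝ)⁻¹ ≤ 1 := by
    rw [← div_eq_mul_inv, div_le_one (by positivity)]
    exact_mod_cast (card_le_univ _).trans_eq (Fintype.card_fin K)
  have hhead : ∑ k ∈ Iio i, (K : ℝ)⁻¹ ^ ρ k = ∑ k ∈ Iio i, (K : ℝ)⁻¹ ^ g k :=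
    sum_congr rfl fun k hk ↦ by rw [show g k = ρ k from heq k (mem_Iio.1 hk)]
  rw [xi_eq_sum_Iio_add_sum_Ici K g i, xi_eq_sum_Iio_add_sum_Ici K ρ i, hhead]
  refine (add_lt_add_iff_left _).2 <| sum_pow_lt_sum_pow_of_lt (by positivity)
    (inv_lt_one_of_one_lt₀ (by exact_mod_cast hK)) hcard (mem_Ici.2 le_rfl)
    fun k hk ↦ hi.trans_le (hρ (mem_Ici.1 hk))

theorem xi_strictAntiOn {K : ℕ} (hK : 1 < K) :
    StrictAntiOn (fun v : Lex (Fin K → ℕ) ↦ xi K (ofLex v)) {v | Monotone (ofLex v)} :=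
  fun _ _ _ hρ h ↦ xi_lt_xi_of_toLex_lt hK hρ h

/-- Lemma 2 of the paper: on sorted vectors, `ξ` reverses the lexicographic order:
`g ≤ ρ` lexicographically iff `ξ(g) ≥ ξ(ρ)`. -/
theorem stmt_2 (K : ℕ) (hK : 2 ≤ K) (g ρ : Fin K → ℕ)
    (hg : Monotone g) (hρ : Monotone ρ) :
    toLex g ≤ toLex ρ ↔ xi K g ≥ xi K ρ :=
  ((xi_strictAntiOn hK).le_iff_ge hρ hg).symm
end

section
/- Let N and J be natural numbers and let P be the set of real N × J matrices x such that x(n,j) ≥ 0 for all n, j; ∑_{j} x(n,j) = 1 for every row n; and ∑_{n} x(n,j) ≤ 1 for every column j. Then every extreme point of the convex set P has all its entries in {0,1}. -/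
/-!
Put `x` as the upper-right block of a doubly stochastic matrix indexed by `ι ⊕ κ`. By the
Birkhoff–von Neumann theorem, the upper-right blocks of doubly stochastic matrices form the convex
hull `K` of the upper-right blocks of permutation matrices, which are `0`-`1` matrices. Rows of
matrices in `K` sum to at most `1`, so the total mass on `K` is at most `card ι`, and the selection
polytope is exactly the face of `K` where this bound is attained. An extreme point of a face is an
extreme point of `K`, and the extreme points of a convex hull lie in the generating set.
-/

open Finset Matrix

theorem isExtreme_setOf_eq_of_forall_le {𝕜 E : Type*} [CommRing 𝕜] [LinearOrder 𝕜]
    [IsStrictOrderedRing 𝕜] [AddCommGroup E] [Module 𝕜 E] {A : Set E} (f : E →ₗ[𝕜] 𝕜) {c : 𝕜}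
    (hf : ∀ y ∈ A, f y ≤ c) : IsExtreme 𝕜 A {y ∈ A | f y = c} := by
  refine ⟨Set.sep_subset _ _, ?_⟩
  rintro y₁ hy₁ y₂ hy₂ x ⟨-, hx⟩ ⟨a, b, ha, hb, hab, rfl⟩
  have hsum : a * f y₁ + b * f y₂ = c := by simpa using hx
  have h₂ : b * f y₂ ≤ b * c := mul_le_mul_of_nonneg_left (hf y₂ hy₂) hb.le
  refine ⟨hy₁, le_antisymm (hf y₁ hy₁) (le_of_mul_le_mul_left ?_ ha)⟩
  linear_combination h₂ - hsum + c * hab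

theorem PEquiv.toMatrix_apply_eq_zero_or_one {m n α : Type*} [DecidableEq n] [Zero α] [One α]
    (f : m ≃. n) (i : m) (j : n) :
    (f.toMatrix : Matrix m n α) i j = 0 ∨ (f.toMatrix : Matrix m n α) i j = 1 := by
  by_cases h : j ∈ f i <;> simp [PEquiv.toMatrix_apply, h]

variable {R ι κ : Type*} [Field R] [LinearOrder R] [IsStrictOrderedRing R]
  [Fintype ι] [Fintype κ] [DecidableEq ι] [DecidableEq κ]

variable (R ι κ) in
def selectionPolytope : Set (Matrix ι κ R) :=
  {x | (∀ i j, 0 ≤ x i j) ∧ (∀ i, ∑ j, x i j = 1) ∧ (∀ j, ∑ i, x i j ≤ 1)}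

/-- The diagonal block tops column `j` of `x` (of mass `cⱼ ≤ 1`) up to `1`; row `j` then lacks
mass `cⱼ`, which is spread uniformly over the `ι`-columns. These receive `∑ⱼ cⱼ / card ι = 1`
because the rows of `x` sum to `1`. -/
def blockCompletion (x : Matrix ι κ R) : Matrix (ι ⊕ κ) (ι ⊕ κ) R :=
  fromBlocks 0 x (of fun j _ => (∑ i, x i j) / Fintype.card ι) (diagonal fun j => 1 - ∑ i, x i j)

theorem blockCompletion_mem_doublyStochastic [Nonempty ι] {x : Matrix ι κ R}
    (hx : x ∈ selectionPolytope R ι κ) : blockCompletion x ∈ doublyStochastic R (ι ⊕ κ) := by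
  obtain ⟨hnonneg, hrow, hcol⟩ := hx
  have hcard : (Fintype.card ι : R) ≠ 0 := by positivity
  rw [mem_doublyStochastic_iff_sum]
  refine ⟨?_, ?_, ?_⟩
  · rintro (i | j) (i' | j') <;> simp only [blockCompletion, fromBlocks_apply₁₁, fromBlocks_apply₁₂,
      fromBlocks_apply₂₁, fromBlocks_apply₂₂, Matrix.zero_apply, of_apply, diagonal_apply]
    · exact le_rfl
    · exact hnonneg i j'
    · exact div_nonneg (sum_nonneg fun i _ => hnonneg i j) (by positivity)
    · split_ifs <;> linarith [hcol j]
  · rintro (i | j) <;>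
      simp [blockCompletion, Fintype.sum_sum_type, diagonal_apply, hrow, mul_div_cancel₀ _ hcard]
  · rintro (i | j)
    · simp only [blockCompletion, Fintype.sum_sum_type, fromBlocks_apply₁₁, fromBlocks_apply₂₁,
        Matrix.zero_apply, of_apply, sum_const_zero, zero_add]
      rw [← sum_div, sum_comm]
      simp [hrow, hcard]
    · simp [blockCompletion, Fintype.sum_sum_type, diagonal_apply]

variable (R ι κ) in
def doublyStochasticBlocks₁₂ : Set (Matrix ι κ R) :=
  toBlocks₁₂ '' (doublyStochastic R (ι ⊕ κ) : Set (Matrix (ι ⊕ κ) (ι ⊕ κ) R))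

theorem sum_toBlocks₁₂_row_le_one {M : Matrix (ι ⊕ κ) (ι ⊕ κ) R}
    (hM : M ∈ doublyStochastic R (ι ⊕ κ)) (i : ι) : ∑ j, M.toBlocks₁₂ i j ≤ 1 :=
  calc ∑ j, M.toBlocks₁₂ i j
      ≤ ∑ i', M (.inl i) (.inl i') + ∑ j, M (.inl i) (.inr j) :=
        le_add_of_nonneg_left (sum_nonneg fun _ _ => nonneg_of_mem_doublyStochastic hM)
    _ = 1 := by simpa [Fintype.sum_sum_type] using sum_row_of_mem_doublyStochastic hM (.inl i)

theorem sum_toBlocks₁₂_col_le_one {M : Matrix (ι ⊕ κ) (ι ⊕ κ) R}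
    (hM : M ∈ doublyStochastic R (ι ⊕ κ)) (j : κ) : ∑ i, M.toBlocks₁₂ i j ≤ 1 :=
  calc ∑ i, M.toBlocks₁₂ i j
      ≤ ∑ i, M (.inl i) (.inr j) + ∑ j', M (.inr j') (.inr j) :=
        le_add_of_nonneg_right (sum_nonneg fun _ _ => nonneg_of_mem_doublyStochastic hM)
    _ = 1 := by simpa [Fintype.sum_sum_type] using sum_col_of_mem_doublyStochastic hM (.inr j)

theorem doublyStochasticBlocks₁₂_eq_convexHull :
    doublyStochasticBlocks₁₂ R ι κ =
      convexHull R (Set.range fun σ : Equiv.Perm (ι ⊕ κ) => (σ.permMatrix R).toBlocks₁₂) := by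
  have hlin : IsLinearMap R (toBlocks₁₂ : Matrix (ι ⊕ κ) (ι ⊕ κ) R → Matrix ι κ R) :=
    ⟨fun _ _ => rfl, fun _ _ => rfl⟩
  rw [doublyStochasticBlocks₁₂, doublyStochastic_eq_convexHull_permMatrix, hlin.image_convexHull]
  congr 1
  ext y
  simp

theorem selectionPolytope_eq_setOf_sum_eq_card [Nonempty ι] :
    selectionPolytope R ι κ =
      {y ∈ doublyStochasticBlocks₁₂ R ι κ | ∑ i, ∑ j, y i j = Fintype.card ι} := by
  ext y
  constructor
  · intro hy
    refine ⟨⟨blockCompletion y, blockCompletion_mem_doublyStochastic hy, ?_⟩, ?_⟩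
    · exact toBlocks_fromBlocks₁₂ ..
    · simp [hy.2.1]
  · rintro ⟨⟨M, hM, rfl⟩, htotal⟩
    have hrow_le := sum_toBlocks₁₂_row_le_one hM
    refine ⟨fun i j => nonneg_of_mem_doublyStochastic hM, fun i => ?_,
      sum_toBlocks₁₂_col_le_one hM⟩
    rw [Fintype.card_eq_sum_ones, Nat.cast_sum, Nat.cast_one] at htotal
    exact (sum_eq_sum_iff_of_le fun i _ => hrow_le i).1 htotal i (mem_univ i)

theorem isExtreme_selectionPolytope [Nonempty ι] :
    IsExtreme R (doublyStochasticBlocks₁₂ R ι κ) (selectionPolytope R ι κ) := by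
  let totalMass : Matrix ι κ R →ₗ[R] R := ∑ i, ∑ j, entryLinearMap R R i j
  have htotalMass (y : Matrix ι κ R) : totalMass y = ∑ i, ∑ j, y i j := by
    simp [totalMass, LinearMap.sum_apply]
  have hface := isExtreme_setOf_eq_of_forall_le totalMass
      (A := doublyStochasticBlocks₁₂ R ι κ) (c := Fintype.card ι) <| by
    rintro _ ⟨M, hM, rfl⟩
    rw [htotalMass, Fintype.card_eq_sum_ones, Nat.cast_sum, Nat.cast_one]
    exact sum_le_sum fun i _ => sum_toBlocks₁₂_row_le_one hM i
  simpa only [htotalMass, ← selectionPolytope_eq_setOf_sum_eq_card] using hface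

theorem extremePoints_selectionPolytope_subset [Nonempty ι] :
    (selectionPolytope R ι κ).extremePoints R ⊆
      Set.range fun σ : Equiv.Perm (ι ⊕ κ) => (σ.permMatrix R).toBlocks₁₂ :=
  calc (selectionPolytope R ι κ).extremePoints R
      ⊆ (doublyStochasticBlocks₁₂ R ι κ).extremePoints R :=
        isExtreme_selectionPolytope.extremePoints_subset_extremePoints
    _ ⊆ _ := by
        rw [doublyStochasticBlocks₁₂_eq_convexHull]
        exact extremePoints_convexHull_subset

/-- Integrality of the relaxed selection polytope: every extreme point of the
polytope of doubly-substochastic selection matrices (rows sum to exactly 1,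
columns sum to at most 1, entries nonnegative) has all entries in `{0,1}`. -/
theorem stmt_8 (N J : ℕ)
    (P : Set (Matrix (Fin N) (Fin J) ℝ))
    (hP : P = {x | (∀ n j, 0 ≤ x n j) ∧ (∀ n, ∑ j, x n j = 1) ∧ (∀ j, ∑ n, x n j ≤ 1)})
    (x : Matrix (Fin N) (Fin J) ℝ) (hx : x ∈ Set.extremePoints ℝ P) :
    ∀ n j, x n j = 0 ∨ x n j = 1 := by
  subst hP
  intro n j
  have : Nonempty (Fin N) := ⟨n⟩
  obtain ⟨σ, rfl⟩ := extremePoints_selectionPolytope_subset (R := ℝ) hx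
  exact PEquiv.toMatrix_apply_eq_zero_or_one σ.toPEquiv (.inl n) (.inr j)
end
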